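/- Let 𝒦 be a class-locally presentable category and 𝒞 a cone-coreflective class of morphisms of 𝒦, and let λ be a regular cardinal such that every morphism in 𝒞 has λ-presentable domain and λ-presentable codomain. Then the class 𝒞^□ is closed under λ-filtered colimits in the morphism category 𝒦^→. -/

import Mathlib

universe w₂ w₁ w v u u₁ u₂ u₃

open CategoryTheory CategoryTheory.Limits Opposite Order

namespace ClassAcc

/-- A category `J` is `κ`-filtered provided that every diagram in `J` with fewer than `κ`
morphisms admits a cocone. -/
def IsCardinalFiltered (J : Type w) [Category.{w₁} J] (κ : Cardinal.{v}) : Prop :=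
  ∀ (D : Type v) [SmallCategory D], Cardinal.mk (Σ (a : D) (b : D), a ⟶ b) < κ →
    ∀ (F : D ⥤ J), Nonempty (Cocone F)

/-- A category has `κ`-filtered colimits if it has colimits of all small `κ`-filtered shapes. -/
def HasCardinalFilteredColimits (κ : Cardinal.{v}) (K : Type u) [Category.{w} K] : Prop :=
  ∀ (J : Type v) [SmallCategory J], IsCardinalFiltered J κ → HasColimitsOfShape J K

/-- An object `X` is `κ`-presentable if `Hom(X, -)` preserves `κ`-filtered colimits. -/
def IsPresentable (κ : Cardinal.{v}) {K : Type u} [Category.{w} K] (X : K) : Prop :=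
  ∀ (J : Type v) [SmallCategory J], IsCardinalFiltered J κ →
    PreservesColimitsOfShape J (coyoneda.obj (op X))

/-- `X` is a `κ`-filtered colimit of `κ`-presentable objects. -/
def IsFilteredColimitOfPresentables (κ : Cardinal.{v}) {K : Type u} [Category.{w} K]
    (X : K) : Prop :=
  ∃ (J : Cat.{v, v}) (D : J ⥤ K) (c : Cocone D),
    IsCardinalFiltered (J : Type v) κ ∧ Nonempty (IsColimit c) ∧ c.pt = X ∧
      ∀ j, IsPresentable κ (D.obj j)

/-- A category `K` is class-`κ`-accessible if it has `κ`-filtered colimits and every object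
is a `κ`-filtered colimit of `κ`-presentable objects. -/
def ClassAccessible (κ : Cardinal.{v}) (K : Type u) [Category.{w} K] : Prop :=
  HasCardinalFilteredColimits κ K ∧ ∀ X : K, IsFilteredColimitOfPresentables κ X

/-- A class-`κ`-accessible category which is complete and cocomplete is
class-locally `κ`-presentable. -/
def ClassLocallyPresentable (κ : Cardinal.{v}) (K : Type u) [Category.{w} K] : Prop :=
  ClassAccessible κ K ∧ HasLimitsOfSize.{v, v} K ∧ HasColimitsOfSize.{v, v} K

/-- A category is class-accessible if it is class-`κ`-accessible for some regular cardinal. -/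
def IsClassAccessibleCat (K : Type u) [Category.{v} K] : Prop :=
  ∃ κ : Cardinal.{v}, κ.IsRegular ∧ ClassAccessible κ K

/-- A category is class-locally presentable if it is class-locally `κ`-presentable for some
regular cardinal `κ`. -/
def IsClassLocallyPresentableCat (K : Type u) [Category.{v} K] : Prop :=
  ∃ κ : Cardinal.{v}, κ.IsRegular ∧ ClassLocallyPresentable κ K

/-- A functor preserves `κ`-filtered colimits. -/
def PreservesCardinalFilteredColimits (κ : Cardinal.{v}) {K : Type u} [Category.{w} K]
    {L : Type u₁} [Category.{w₁} L] (F : K ⥤ L) : Prop :=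
  ∀ (J : Type v) [SmallCategory J], IsCardinalFiltered J κ → PreservesColimitsOfShape J F

/-- A class-`κ`-accessible functor between class-`κ`-accessible categories. -/
def ClassAccessibleFunctor (κ : Cardinal.{v}) {K : Type u} [Category.{w} K]
    {L : Type u₁} [Category.{w₁} L] (F : K ⥤ L) : Prop :=
  ClassAccessible κ K ∧ ClassAccessible κ L ∧ PreservesCardinalFilteredColimits κ F

/-- A strongly class-`κ`-accessible functor moreover preserves `κ`-presentable objects. -/
def StronglyClassAccessibleFunctor (κ : Cardinal.{v}) {K : Type u} [Category.{w} K]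
    {L : Type u₁} [Category.{w₁} L] (F : K ⥤ L) : Prop :=
  ClassAccessibleFunctor κ F ∧ ∀ X : K, IsPresentable κ X → IsPresentable κ (F.obj X)

/-- `F` is strongly class-accessible if it is strongly class-`κ`-accessible for some regular
cardinal `κ`. -/
def IsStronglyClassAccessibleFunctor {K : Type u} [Category.{v} K]
    {L : Type u₁} [Category.{v} L] (F : K ⥤ L) : Prop :=
  ∃ κ : Cardinal.{v}, κ.IsRegular ∧ StronglyClassAccessibleFunctor κ F

/-- A full subcategory (given by a predicate on objects) is closed under `κ`-filtered colimits. -/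
def ClosedUnderCardinalFilteredColimits (κ : Cardinal.{v}) {K : Type u} [Category.{w} K]
    (P : K → Prop) : Prop :=
  ∀ (J : Type v) [SmallCategory J], IsCardinalFiltered J κ →
    ∀ (D : J ⥤ K) (c : Cocone D), IsColimit c → (∀ j, P (D.obj j)) → P c.pt

/-- A full subcategory is strongly accessibly embedded if for some regular cardinal `κ` it is
closed under `κ`-filtered colimits and its inclusion preserves `κ`-presentable objects. -/
def StronglyAccessiblyEmbedded {K : Type u} [Category.{v} K] (P : K → Prop) : Prop :=
  ∃ κ : Cardinal.{v}, κ.IsRegular ∧ ClosedUnderCardinalFilteredColimits κ P ∧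
    ∀ X : ObjectProperty.FullSubcategory P, IsPresentable κ X → IsPresentable κ X.obj

end ClassAcc
namespace ClassAcc

/-- A class `C` of morphisms is cone-coreflective if for every morphism `f` there is a set
(indexed by a small type) of morphisms of `C` through which every morphism `g ⟶ f` of the
arrow category with `g ∈ C` factors. -/
def ConeCoreflective {K : Type u} [Category.{v} K] (C : MorphismProperty K) : Prop :=
  ∀ ⦃X Y : K⦄ (f : X ⟶ Y), ∃ (I : Type v) (S : I → Arrow K),
    (∀ i, C (S i).hom) ∧
    ∀ (g : Arrow K), C g.hom → ∀ (u : g ⟶ Arrow.mk f),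
      ∃ (i : I) (p : g ⟶ S i) (q : S i ⟶ Arrow.mk f), p ≫ q = u

/-- Stability under retracts in the arrow category. -/
def StableUnderRetracts {K : Type u} [Category.{v} K] (S : MorphismProperty K) : Prop :=
  ∀ ⦃X Y X' Y' : K⦄ (f : X ⟶ Y) (g : X' ⟶ Y'),
    (∃ (i : Arrow.mk f ⟶ Arrow.mk g) (r : Arrow.mk g ⟶ Arrow.mk f), i ≫ r = 𝟙 _) →
    S g → S f

/-- The restriction of a chain `F : γ ⥤ K` to the elements below `m`. -/
def restrictionBelow {γ : Type v} [Preorder γ] {K : Type u} [Category.{v} K]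
    (F : γ ⥤ K) (m : γ) : {i : γ // i < m} ⥤ K :=
  (Monotone.functor (f := fun i : {i : γ // i < m} => (i : γ)) fun _ _ h => h) ⋙ F

/-- The cocone over the restriction of `F` below `m` with apex `F.obj m`. -/
def coconeBelow {γ : Type v} [Preorder γ] {K : Type u} [Category.{v} K]
    (F : γ ⥤ K) (m : γ) : Cocone (restrictionBelow F m) where
  pt := F.obj m
  ι :=
    { app := fun i => F.map (homOfLE i.2.le)
      naturality := fun i j g => by
        dsimp [restrictionBelow]
        rw [Category.comp_id, ← F.map_comp]
        rfl }

/-- `S` is closed under transfinite compositions: for every well-ordered chain `F` whose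
successor steps lie in `S` and which is smooth (colimits at limit stages), the induced
morphism from the bottom object to the colimit of the chain lies in `S`. -/
def ClosedUnderTransfiniteComposition {K : Type u} [Category.{v} K]
    (S : MorphismProperty K) : Prop :=
  ∀ (γ : Type v) [LinearOrder γ] [OrderBot γ] [SuccOrder γ] [WellFoundedLT γ] (F : γ ⥤ K),
    (∀ i : γ, ¬IsMax i → S (F.map (homOfLE (le_succ i)))) →
    (∀ m : γ, IsSuccLimit m → Nonempty (IsColimit (coconeBelow F m))) →
    ∀ (c : Cocone F), IsColimit c → S (c.ι.app ⊥)

/-- `S` contains all isomorphisms, all pushouts of morphisms of `C`, and is closed under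
transfinite compositions and retracts. -/
def ClosedCofClass {K : Type u} [Category.{v} K] (C S : MorphismProperty K) : Prop :=
  (∀ ⦃X Y : K⦄ (f : X ⟶ Y), IsIso f → S f) ∧
  (∀ ⦃A B A' P : K⦄ (f : A ⟶ B) (t : A ⟶ A') (b : B ⟶ P) (g : A' ⟶ P),
      C f → IsPushout f t b g → S g) ∧
  ClosedUnderTransfiniteComposition S ∧
  StableUnderRetracts S

/-- `cof C` is the smallest class of morphisms containing the isomorphisms and closed under
transfinite compositions, pushouts of morphisms of `C`, and retracts. -/
def cof {K : Type u} [Category.{v} K] (C : MorphismProperty K) : MorphismProperty K :=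
  fun _ _ f => ∀ S : MorphismProperty K, ClosedCofClass C S → S f

/-- The class of morphisms with the right lifting property w.r.t. every morphism of `C`. -/
def rlp {K : Type u} [Category.{v} K] (C : MorphismProperty K) : MorphismProperty K :=
  fun _ _ g => ∀ ⦃A B : K⦄ (f : A ⟶ B), C f → HasLiftingProperty f g

/-- The class of morphisms with the left lifting property w.r.t. every morphism of `C`. -/
def llp {K : Type u} [Category.{v} K] (C : MorphismProperty K) : MorphismProperty K :=
  fun _ _ f => ∀ ⦃A B : K⦄ (g : A ⟶ B), C g → HasLiftingProperty f g

/-- `(L, R)` is a weak factorization system. -/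
def IsWeakFactorizationSystem {K : Type u} [Category.{v} K]
    (L R : MorphismProperty K) : Prop :=
  R = rlp L ∧ L = llp R ∧
    ∀ ⦃X Y : K⦄ (h : X ⟶ Y), ∃ (Z : K) (f : X ⟶ Z) (g : Z ⟶ Y), L f ∧ R g ∧ f ≫ g = h

/-- `f ⊥ g` : every commutative square from `f` to `g` has a unique diagonal filler. -/
def Orth {K : Type u} [Category.{v} K] {A B C D : K} (f : A ⟶ B) (g : C ⟶ D) : Prop :=
  ∀ (u : A ⟶ C) (v : B ⟶ D), u ≫ g = f ≫ v → ∃! d : B ⟶ C, f ≫ d = u ∧ d ≫ g = v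

/-- The class of morphisms orthogonal (on the right) to every morphism of `C`. -/
def perp {K : Type u} [Category.{v} K] (C : MorphismProperty K) : MorphismProperty K :=
  fun _ _ g => ∀ ⦃A B : K⦄ (f : A ⟶ B), C f → Orth f g

/-- The class of morphisms orthogonal (on the left) to every morphism of `C`. -/
def perpLeft {K : Type u} [Category.{v} K] (C : MorphismProperty K) : MorphismProperty K :=
  fun _ _ f => ∀ ⦃A B : K⦄ (g : A ⟶ B), C g → Orth f g

/-- `(L, R)` is an (orthogonal) factorization system. -/
def IsFactorizationSystem {K : Type u} [Category.{v} K]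
    (L R : MorphismProperty K) : Prop :=
  R = perp L ∧ L = perpLeft R ∧
    ∀ ⦃X Y : K⦄ (h : X ⟶ Y), ∃ (Z : K) (f : X ⟶ Z) (g : Z ⟶ Y), L f ∧ R g ∧ f ≫ g = h

/-- A class of morphisms of `K` is closed under colimits of a given small shape in the
arrow category. -/
def ClosedUnderColimitsInArrow {K : Type u} [Category.{v} K]
    (S : MorphismProperty K) : Prop :=
  ∀ (J : Type v) [SmallCategory J] (D : J ⥤ Arrow K) (c : Cocone D),
    IsColimit c → (∀ j, S (D.obj j).hom) → S c.pt.hom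

/-- `colimClosure C` is the smallest class of morphisms containing `C` and closed under all
(small) colimits in the arrow category. -/
def colimClosure {K : Type u} [Category.{v} K] (C : MorphismProperty K) :
    MorphismProperty K :=
  fun _ _ f => ∀ S : MorphismProperty K, C ≤ S → ClosedUnderColimitsInArrow S → S f

/-- `X` is injective with respect to every morphism of `C`. -/
def InjClass {K : Type u} [Category.{v} K] (C : MorphismProperty K) (X : K) : Prop :=
  ∀ ⦃A B : K⦄ (h : A ⟶ B), C h → ∀ u : A ⟶ X, ∃ v : B ⟶ X, h ≫ v = u

/-- `X` is orthogonal to every morphism of `C`. -/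
def OrtClass {K : Type u} [Category.{v} K] (C : MorphismProperty K) (X : K) : Prop :=
  ∀ ⦃A B : K⦄ (h : A ⟶ B), C h → ∀ u : A ⟶ X, ∃! v : B ⟶ X, h ≫ v = u

/-- A full subcategory `P` is weakly reflective if every object admits a weak reflection
into `P`. -/
def WeaklyReflective {K : Type u} [Category.{v} K] (P : K → Prop) : Prop :=
  ∀ X : K, ∃ (X' : K) (r : X ⟶ X'), P X' ∧
    ∀ (Y : K) (f : X ⟶ Y), P Y → ∃ g : X' ⟶ Y, r ≫ g = f

end ClassAcc
namespace ClassAcc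

/-!
A commutative square from `f : A ⟶ B` to the colimit arrow is a morphism `Arrow.mk f ⟶ c.pt`
of `K^→`. Colimits in `K^→` are computed componentwise, so since `A` and `B` are `κ`-presentable
both components factor through a common stage of the `κ`-filtered diagram, and at a later stage
the factored square commutes. Its lift there, followed by the colimit injection, lifts the
original square.
-/

theorem isFiltered_of_isCardinalFiltered {J : Type w} [Category.{w₁} J] {κ : Cardinal.{v}}
    (hκ : Cardinal.aleph0 ≤ κ) (hJ : IsCardinalFiltered J κ) : IsFiltered J :=
  IsFiltered.of_cocone_nonempty.{v} J fun F =>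
    hJ _ ((Cardinal.mk_lt_aleph0_iff.mpr inferInstance).trans_le hκ) F

section Arrow

variable {K : Type u} [Category.{v} K] {J : Type w} [Category.{w₁} J] {D : J ⥤ Arrow K}

theorem _root_.CategoryTheory.Limits.Cocone.w_left (c : Cocone D) {i i' : J} (g : i ⟶ i') :
    (D.map g).left ≫ (c.ι.app i').left = (c.ι.app i).left :=
  congrArg Arrow.Hom.left (c.w g)

theorem _root_.CategoryTheory.Limits.Cocone.w_right (c : Cocone D) {i i' : J} (g : i ⟶ i') :
    (D.map g).right ≫ (c.ι.app i').right = (c.ι.app i).right :=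
  congrArg Arrow.Hom.right (c.w g)

variable [IsFiltered J] [HasColimitsOfShape J K] {c : Cocone D} {A B : K}
  [PreservesColimitsOfShape J (coyoneda.obj (op A))]
  [PreservesColimitsOfShape J (coyoneda.obj (op B))]

theorem _root_.CategoryTheory.Arrow.exists_hom_of_isColimit (hc : IsColimit c) {f : A ⟶ B}
    (φ : Arrow.mk f ⟶ c.pt) : ∃ (j : J) (ψ : Arrow.mk f ⟶ D.obj j), ψ ≫ c.ι.app j = φ := by
  have hcL := isColimitOfPreserves Arrow.leftFunc hc
  have hcR := isColimitOfPreserves Arrow.rightFunc hc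
  obtain ⟨j₁, u, hu⟩ : ∃ (j : J) (u : A ⟶ (D.obj j).left), u ≫ (c.ι.app j).left = φ.left :=
    exists_hom_of_preservesColimit_coyoneda hcL (X := A) φ.left
  obtain ⟨j₂, v, hv⟩ : ∃ (j : J) (v : B ⟶ (D.obj j).right), v ≫ (c.ι.app j).right = φ.right :=
    exists_hom_of_preservesColimit_coyoneda hcR (X := B) φ.right
  obtain ⟨j₃, u, v, hu, hv⟩ : ∃ (j : J) (u : A ⟶ (D.obj j).left) (v : B ⟶ (D.obj j).right),
      u ≫ (c.ι.app j).left = φ.left ∧ v ≫ (c.ι.app j).right = φ.right :=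
    ⟨IsFiltered.max j₁ j₂, u ≫ (D.map (IsFiltered.leftToMax j₁ j₂)).left,
      v ≫ (D.map (IsFiltered.rightToMax j₁ j₂)).right,
      by rw [Category.assoc, c.w_left, hu], by rw [Category.assoc, c.w_right, hv]⟩
  have hι : (c.ι.app j₃).left ≫ c.pt.hom = (D.obj j₃).hom ≫ (c.ι.app j₃).right := Arrow.w _
  have hsq : (u ≫ (D.obj j₃).hom) ≫ (c.ι.app j₃).right = (f ≫ v) ≫ (c.ι.app j₃).right := by
    rw [Category.assoc, ← hι, ← Category.assoc, hu, Arrow.w_mk_left φ, Category.assoc, hv]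
  obtain ⟨j, a, ha⟩ := exists_eq_of_preservesColimit_coyoneda_self hcR _ _ hsq
  refine ⟨j, Arrow.homMk (u ≫ (D.map a).left) (v ≫ (D.map a).right) ?_, ?_⟩
  · rw [Category.assoc, Arrow.w (D.map a), ← Category.assoc]
    exact ha.trans (Category.assoc _ _ _)
  · ext
    · exact (Category.assoc _ _ _).trans ((u ≫= c.w_left a).trans hu)
    · exact (Category.assoc _ _ _).trans ((v ≫= c.w_right a).trans hv)

theorem _root_.CategoryTheory.hasLiftingProperty_of_isColimit (hc : IsColimit c) (f : A ⟶ B)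
    (hD : ∀ j, HasLiftingProperty f (D.obj j).hom) : HasLiftingProperty f c.pt.hom := by
  refine ⟨fun {u v} sq => ?_⟩
  obtain ⟨j, ψ, hψ⟩ := Arrow.exists_hom_of_isColimit hc (Arrow.homMk u v sq.w)
  have sqj : CommSq ψ.left f (D.obj j).hom ψ.right := ⟨Arrow.w ψ⟩
  have hψL : ψ.left ≫ (c.ι.app j).left = u := congrArg Arrow.Hom.left hψ
  have hψR : ψ.right ≫ (c.ι.app j).right = v := congrArg Arrow.Hom.right hψ
  have hιj : (c.ι.app j).left ≫ c.pt.hom = (D.obj j).hom ≫ (c.ι.app j).right := Arrow.w _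
  exact ⟨⟨{ l := sqj.lift ≫ (c.ι.app j).left
            fac_left := by rw [← Category.assoc, sqj.fac_left, hψL]
            fac_right := by
              rw [Category.assoc, hιj, ← Category.assoc, sqj.fac_right, hψR] }⟩⟩

end Arrow

theorem rlp_closedUnderFilteredColimits_general (κ : Cardinal.{v}) (hκ : κ.IsRegular)
    {K : Type u} [Category.{v} K] (hK : IsClassLocallyPresentableCat K)
    (C : MorphismProperty K)
    (hpres : ∀ ⦃X Y : K⦄ (f : X ⟶ Y), C f → IsPresentable κ X ∧ IsPresentable κ Y) :
    ∀ (J : Type v) [SmallCategory J], IsCardinalFiltered J κ →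
      ∀ (D : J ⥤ Arrow K) (c : Cocone D), IsColimit c →
        (∀ j, rlp C (D.obj j).hom) → rlp C c.pt.hom := by
  intro J _ hJ D c hc hD A B f hf
  obtain ⟨-, -, -, -, hcolim⟩ := hK
  have := isFiltered_of_isCardinalFiltered hκ.aleph0_le hJ
  have := (hpres f hf).1 J hJ
  have := (hpres f hf).2 J hJ
  exact hasLiftingProperty_of_isColimit hc f fun j => hD j f hf

/-- **Corollary 4.5.** Let `K` be a class-locally presentable category and `C` a
cone-coreflective class of morphisms which are `κ`-presentable (i.e. have `κ`-presentable
domains and codomains). Then `C^□` is closed under `κ`-filtered colimits in the morphism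
category `K^→`. -/
theorem rlp_closedUnderFilteredColimits (κ : Cardinal.{v}) (hκ : κ.IsRegular)
    {K : Type u} [Category.{v} K] (hK : IsClassLocallyPresentableCat K)
    (C : MorphismProperty K) (hC : ConeCoreflective C)
    (hpres : ∀ ⦃X Y : K⦄ (f : X ⟶ Y), C f → IsPresentable κ X ∧ IsPresentable κ Y) :
    ∀ (J : Type v) [SmallCategory J], IsCardinalFiltered J κ →
      ∀ (D : J ⥤ Arrow K) (c : Cocone D), IsColimit c →
        (∀ j, rlp C (D.obj j).hom) → rlp C c.pt.hom :=
  rlp_closedUnderFilteredColimits_general κ hκ hK C hpres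

end ClassAcc
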